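/- arXiv:math/0005263 — 2 statements merged into one kernel-verified Lean document; each statement's English description precedes it below -/
import Mathlib

section
/- Fix 0 < p ≤ 1, let n ≥ 1 and let A ⊆ C_n be a nonempty subset. Set ρ = p/2 − Δ(A,p)/n. Then ρ²/p ≤ (ln|A|)/n. -/
/-- The randomized Hamming distance `d_l(x,y) = Σ_{i : x i ≠ y i} l i`, where the coordinates
with `l i = 1` are the ones that are counted. -/
def dl {ι : Type*} [Fintype ι] (l x y : ι → Bool) : ℕ :=
  (Finset.univ.filter fun i => x i ≠ y i ∧ l i = true).card

/-- The randomized Hamming distance from a point `x` to a subset `A`: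
`d_l(x,A) = min_{y ∈ A} d_l(x,y)`. -/
noncomputable def dlToSet {ι : Type*} [Fintype ι] (l x : ι → Bool) (A : Set (ι → Bool)) : ℕ :=
  sInf ((fun y => dl l x y) '' A)

/-- The probability `p^{|l|}(1-p)^{n-|l|}` of the vector `l` of `n` independent
Bernoulli(p) coordinates. -/
noncomputable def bernWeight {ι : Type*} [Fintype ι] (p : ℝ) (l : ι → Bool) : ℝ :=
  p ^ (Finset.univ.filter fun i => l i = true).card *
    (1 - p) ^ (Finset.univ.filter fun i => l i = false).card

/-- `Δ(A,p)`: the expectation of `d_l(x,A)` when `x` is uniform on the cube and `l` has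
independent Bernoulli(p) coordinates. -/
noncomputable def avgDistP {ι : Type*} [Fintype ι] [DecidableEq ι] (p : ℝ)
    (A : Set (ι → Bool)) : ℝ :=
  ∑ l : ι → Bool, ∑ x : ι → Bool,
    (bernWeight p l / 2 ^ Fintype.card ι) * (dlToSet l x A : ℝ)

/-! Jensen's inequality for `exp` gives `exp (-t Δ) ≤ E exp (-t d_l(x,A))`, and
`exp (-t d_l(x,A)) ≤ ∑_{y ∈ A} exp (-t d_l(x,y))` because the minimum is attained. For fixed `y`
the pairs `(l i, x i)` are independent, so every summand has expectation
`((2 - p + p e^{-t}) / 2)^n`. Taking logarithms and using `log u ≤ u - 1` and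
`e^{-t} ≤ 1 - t + t²/2` yields `t (np/2 - Δ) ≤ ln |A| + n p t² / 4` for `t ≥ 0`. Comparing with the
distance to a single point of `A` shows `Δ ≤ np/2`, so `t = 2ρ/p` is admissible and gives the claim.
-/

open Finset Real

section Tensorization

variable {ι : Type*} [Fintype ι]

lemma bernWeight_eq_prod (p : ℝ) (l : ι → Bool) :
    bernWeight p l = ∏ i, if l i then p else 1 - p := by
  simp [bernWeight, prod_ite, Bool.not_eq_true]

lemma bernWeight_nonneg {p : ℝ} (hp0 : 0 ≤ p) (hp1 : p ≤ 1) (l : ι → Bool) :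
    0 ≤ bernWeight p l :=
  mul_nonneg (pow_nonneg hp0 _) (pow_nonneg (sub_nonneg.2 hp1) _)

lemma dl_eq_sum (l x y : ι → Bool) :
    (dl l x y : ℝ) = ∑ i, if x i ≠ y i ∧ l i then 1 else 0 := by
  rw [dl, card_filter]
  push_cast
  rfl

variable [DecidableEq ι]

lemma sum_bernWeight_mul_prod (p : ℝ) (f : ι → Bool → Bool → ℝ) :
    ∑ l : ι → Bool, ∑ x : ι → Bool, bernWeight p l / 2 ^ Fintype.card ι * ∏ i, f i (l i) (x i)
      = ∏ i, (p * (f i true true + f i true false)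
          + (1 - p) * (f i false true + f i false false)) / 2 := by
  let g : ι → Bool → Bool → ℝ := fun i a b => (if a then p else 1 - p) / 2 * f i a b
  calc ∑ l : ι → Bool, ∑ x : ι → Bool, bernWeight p l / 2 ^ Fintype.card ι * ∏ i, f i (l i) (x i)
      = ∑ l : ι → Bool, ∑ x : ι → Bool, ∏ i, g i (l i) (x i) := by
        simp only [g, bernWeight_eq_prod, prod_mul_distrib, prod_div_distrib, prod_const,
          card_univ]
    _ = ∏ i, ∑ a, ∑ b, g i a b := by
        simp only [Fintype.prod_sum]
    _ = _ := by
        refine prod_congr rfl fun i _ => ?_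
        simp only [g, Fintype.sum_bool, if_true, Bool.false_eq_true, if_false]
        ring

lemma sum_bernWeight_div (p : ℝ) :
    ∑ l : ι → Bool, ∑ _x : ι → Bool, bernWeight p l / 2 ^ Fintype.card ι = 1 := by
  have h := sum_bernWeight_mul_prod p fun (_ : ι) _ _ => 1
  simp only [prod_const_one, mul_one] at h
  rw [h]
  exact prod_eq_one fun _ _ => by ring

lemma sum_bernWeight_div_mul_dl (p : ℝ) (y : ι → Bool) :
    ∑ l : ι → Bool, ∑ x : ι → Bool, bernWeight p l / 2 ^ Fintype.card ι * dl l x y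
      = Fintype.card ι * (p / 2) := by
  have coord : ∀ i, ∑ l : ι → Bool, ∑ x : ι → Bool, bernWeight p l / 2 ^ Fintype.card ι *
      (if x i ≠ y i ∧ l i then 1 else 0) = p / 2 := by
    intro i
    have h := sum_bernWeight_mul_prod p fun j a b =>
      if j = i then (if b ≠ y j ∧ a then 1 else 0) else 1
    simp only [Fintype.prod_ite_eq'] at h
    rw [h, Fintype.prod_eq_single i fun j hj => by simp only [hj, if_false]; ring]
    cases y i <;> simp
  simp only [dl_eq_sum, mul_sum]
  rw [sum_congr rfl fun l _ => sum_comm, sum_comm]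
  simp only [coord, sum_const, card_univ, nsmul_eq_mul]

lemma sum_bernWeight_div_mul_exp_dl (p t : ℝ) (y : ι → Bool) :
    ∑ l : ι → Bool, ∑ x : ι → Bool, bernWeight p l / 2 ^ Fintype.card ι * exp (-t * dl l x y)
      = ((2 - p + p * exp (-t)) / 2) ^ Fintype.card ι := by
  have factor : ∀ l x : ι → Bool,
      exp (-t * dl l x y) = ∏ i, exp (-t * if x i ≠ y i ∧ l i then 1 else 0) := by
    intro l x
    rw [dl_eq_sum, mul_sum, exp_sum]
  simp only [factor]
  refine (sum_bernWeight_mul_prod p fun i a b => exp (-t * if b ≠ y i ∧ a then 1 else 0)).trans ?_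
  rw [← card_univ, ← prod_const]
  refine prod_congr rfl fun i _ => ?_
  cases y i <;> simp <;> ring

end Tensorization

section DistanceToSet

variable {ι : Type*} [Fintype ι]

lemma dlToSet_le_dl (l x : ι → Bool) {A : Set (ι → Bool)} {y : ι → Bool} (hy : y ∈ A) :
    dlToSet l x A ≤ dl l x y :=
  Nat.sInf_le (Set.mem_image_of_mem _ hy)

lemma exists_dl_eq_dlToSet (l x : ι → Bool) {A : Set (ι → Bool)} (hA : A.Nonempty) :
    ∃ y ∈ A, dl l x y = dlToSet l x A :=
  Nat.sInf_mem (hA.image _)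

lemma exp_neg_mul_dlToSet_le_sum (t : ℝ) (l x : ι → Bool) {A : Set (ι → Bool)}
    (hA : A.Nonempty) :
    exp (-t * dlToSet l x A) ≤ ∑ y ∈ A.toFinite.toFinset, exp (-t * dl l x y) := by
  obtain ⟨y, hy, hdist⟩ := exists_dl_eq_dlToSet l x hA
  rw [← hdist]
  exact single_le_sum (f := fun y => exp (-t * dl l x y)) (fun _ _ => (exp_pos _).le)
    (A.toFinite.mem_toFinset.2 hy)

variable [DecidableEq ι] {p : ℝ}

lemma avgDistP_le (hp0 : 0 ≤ p) (hp1 : p ≤ 1) {A : Set (ι → Bool)} (hA : A.Nonempty) :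
    avgDistP p A ≤ Fintype.card ι * (p / 2) := by
  obtain ⟨y, hy⟩ := hA
  rw [← sum_bernWeight_div_mul_dl p y]
  refine sum_le_sum fun l _ => sum_le_sum fun x _ => ?_
  gcongr
  · exact div_nonneg (bernWeight_nonneg hp0 hp1 l) (by positivity)
  · exact_mod_cast dlToSet_le_dl l x hy

lemma exp_neg_mul_avgDistP_le (hp0 : 0 ≤ p) (hp1 : p ≤ 1) (t : ℝ) {A : Set (ι → Bool)}
    (hA : A.Nonempty) :
    exp (-t * avgDistP p A) ≤ Nat.card A * ((2 - p + p * exp (-t)) / 2) ^ Fintype.card ι := by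
  have hw : ∀ l : ι → Bool, 0 ≤ bernWeight p l / 2 ^ Fintype.card ι :=
    fun l => div_nonneg (bernWeight_nonneg hp0 hp1 l) (by positivity)
  have jensen : exp (-t * avgDistP p A) ≤ ∑ l : ι → Bool, ∑ x : ι → Bool,
      bernWeight p l / 2 ^ Fintype.card ι * exp (-t * dlToSet l x A) := by
    have h := convexOn_exp.map_sum_le (t := univ) (w := fun lx : (ι → Bool) × (ι → Bool) =>
        bernWeight p lx.1 / 2 ^ Fintype.card ι) (p := fun lx => -t * dlToSet lx.1 lx.2 A)
      (fun lx _ => hw lx.1) (by rw [Fintype.sum_prod_type]; exact sum_bernWeight_div p)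
      (fun _ _ => Set.mem_univ _)
    simp only [smul_eq_mul, Fintype.sum_prod_type] at h
    have mean : ∑ l : ι → Bool, ∑ x : ι → Bool,
        bernWeight p l / 2 ^ Fintype.card ι * (-t * dlToSet l x A) = -t * avgDistP p A := by
      simp only [avgDistP, mul_sum]
      exact sum_congr rfl fun l _ => sum_congr rfl fun x _ => by ring
    rwa [mean] at h
  calc exp (-t * avgDistP p A)
      ≤ ∑ l : ι → Bool, ∑ x : ι → Bool,
          bernWeight p l / 2 ^ Fintype.card ι * exp (-t * dlToSet l x A) := jensen
    _ ≤ ∑ l : ι → Bool, ∑ x : ι → Bool, bernWeight p l / 2 ^ Fintype.card ι *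
          ∑ y ∈ A.toFinite.toFinset, exp (-t * dl l x y) := by
        gcongr with l _ x _
        · exact hw l
        · exact exp_neg_mul_dlToSet_le_sum t l x hA
    _ = ∑ y ∈ A.toFinite.toFinset, ∑ l : ι → Bool, ∑ x : ι → Bool,
          bernWeight p l / 2 ^ Fintype.card ι * exp (-t * dl l x y) := by
        simp only [mul_sum]
        rw [sum_congr rfl fun l _ => sum_comm, sum_comm]
    _ = Nat.card A * ((2 - p + p * exp (-t)) / 2) ^ Fintype.card ι := by
        simp only [sum_bernWeight_div_mul_exp_dl, sum_const, nsmul_eq_mul,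
          Nat.card_coe_set_eq, Set.ncard_eq_toFinset_card A A.toFinite]

end DistanceToSet

lemma exp_neg_le_one_sub_add_sq_div_two {x : ℝ} (hx : 0 ≤ x) :
    exp (-x) ≤ 1 - x + x ^ 2 / 2 := by
  have hderiv : ∀ s : ℝ, HasDerivAt (fun s => 1 - s + s ^ 2 / 2 - exp (-s))
      (-1 + s + exp (-s)) s := by
    intro s
    refine ((((hasDerivAt_id s).const_sub 1).add ((hasDerivAt_pow 2 s).div_const 2)).sub
      (hasDerivAt_neg s).exp).congr_deriv ?_
    simp only [Nat.cast_ofNat]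
    ring
  have hmono := monotone_of_hasDerivAt_nonneg hderiv fun s => by
    simp only [Pi.zero_apply]
    linarith [add_one_le_exp (-s)]
  have := hmono hx
  norm_num at this
  linarith

section Concentration

variable {ι : Type*} [Fintype ι] [DecidableEq ι] {p : ℝ}

lemma mul_sub_avgDistP_le (hp0 : 0 ≤ p) (hp1 : p ≤ 1) {t : ℝ} (ht : 0 ≤ t)
    {A : Set (ι → Bool)} (hA : A.Nonempty) :
    t * (Fintype.card ι * (p / 2) - avgDistP p A)
      ≤ log (Nat.card A) + Fintype.card ι * p * t ^ 2 / 4 := by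
  set B := (2 - p + p * exp (-t)) / 2 with hB
  have hB0 : 0 < B := by
    have : 0 ≤ p * exp (-t) := by positivity
    linarith
  have hcard : (0 : ℝ) < Nat.card A := by
    have := hA.to_subtype
    exact_mod_cast Nat.card_pos
  have hlog : -t * avgDistP p A ≤ log (Nat.card A) + Fintype.card ι * log B := by
    rw [← log_pow, ← log_mul hcard.ne' (pow_pos hB0 _).ne', ← log_exp (-t * avgDistP p A)]
    exact log_le_log (exp_pos _) (exp_neg_mul_avgDistP_le hp0 hp1 t hA)
  have hlogB : log B ≤ p * (t ^ 2 / 2 - t) / 2 := by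
    have := mul_le_mul_of_nonneg_left (exp_neg_le_one_sub_add_sq_div_two ht) hp0
    linarith [log_le_sub_one_of_pos hB0]
  linarith [mul_le_mul_of_nonneg_left hlogB (Nat.cast_nonneg (Fintype.card ι) : (0 : ℝ) ≤ _)]

end Concentration

/-- Inequality (4.5.1): for `0 < p ≤ 1`, nonempty `A ⊆ C_n` and `ρ = p/2 - Δ(A,p)/n`,
one has `ρ²/p ≤ (ln |A|)/n`. -/
theorem stmt7 (p : ℝ) (hp0 : 0 < p) (hp1 : p ≤ 1) {n : ℕ} (hn : 1 ≤ n)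
    (A : Set (Fin n → Bool)) (hA : A.Nonempty)
    (ρ : ℝ) (hρ : ρ = p / 2 - avgDistP p A / n) :
    ρ ^ 2 / p ≤ Real.log (Nat.card A) / n := by
  have hn0 : (0 : ℝ) < n := by exact_mod_cast hn
  have hgap : n * (p / 2) - avgDistP p A = n * ρ := by
    rw [hρ]
    field_simp
  have hρ0 : 0 ≤ ρ := by
    have hΔ := avgDistP_le hp0.le hp1 hA
    rw [Fintype.card_fin] at hΔ
    exact (mul_nonneg_iff_of_pos_left hn0).1 (hgap ▸ sub_nonneg.2 hΔ)
  have key := mul_sub_avgDistP_le hp0.le hp1 (t := 2 * ρ / p) (by positivity) hA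
  rw [Fintype.card_fin, hgap] at key
  rw [le_div_iff₀ hn0]
  calc ρ ^ 2 / p * n = 2 * ρ / p * (n * ρ) - n * p * (2 * ρ / p) ^ 2 / 4 := by
        field_simp
        ring
    _ ≤ log (Nat.card A) := by linarith
end

section
/- Fix 0 < p ≤ 1, let N ≥ 1, let A ⊆ C_N be a nonempty subset, and let δ ≥ 0. Let x be uniform on C_N and let l ∈ {0,1}^N have independent Bernoulli(p) coordinates, independent of x. Then P( |d_l(x,A) − Δ(A,p)| ≥ δ + 4√N ) ≤ 4·e^{−δ²/N}. -/
/-!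
As a function of the `N` independent pairs `(x i, l i)`, `d_l(x,A)` changes by at most `1` when
one pair changes. McDiarmid's inequality therefore applies: peeling off one coordinate at a time
and applying Hoeffding's lemma to the conditional expectation of the rest bounds the exponential
moments by `exp (N t² / 8)`, and the Chernoff bound gives
`P(|d_l(x,A) - Δ(A,p)| ≥ T) ≤ 2 exp (-2 T² / N)`, which is stronger than the claim for
`T = δ + 4√N ≥ δ`.
-/

open Real Finset MeasureTheory ProbabilityTheory

theorem sum_mul_exp_le_of_mem_Icc {α : Type*} [Fintype α] {w : α → ℝ} (hw0 : ∀ x, 0 ≤ w x)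
    (hw1 : ∑ x, w x = 1) {v : α → ℝ} {a b : ℝ} (hv : ∀ x, v x ∈ Set.Icc a b) (t : ℝ) :
    ∑ x, w x * exp (t * (v x - ∑ y, w y * v y)) ≤ exp ((b - a) ^ 2 * t ^ 2 / 8) := by
  let _ : MeasurableSpace α := ⊤
  let P : PMF α := PMF.ofFintype (fun x => ENNReal.ofReal (w x)) (by
    rw [← ENNReal.ofReal_sum_of_nonneg fun x _ => hw0 x, hw1, ENNReal.ofReal_one])
  have hsum (F : α → ℝ) : ∫ x, F x ∂P.toMeasure = ∑ x, w x * F x := by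
    simp [PMF.integral_eq_sum, P, hw0]
  have := (hasSubgaussianMGF_of_mem_Icc (μ := P.toMeasure) (X := v) (a := a) (b := b)
    (measurable_of_countable v).aemeasurable (ae_of_all _ hv)).mgf_le t
  simp only [mgf, hsum] at this
  convert this using 2
  push_cast [coe_nnnorm, Real.norm_eq_abs, div_pow, sq_abs]
  ring

section ProductWeight

variable {α : Type*} [Fintype α] (w : α → ℝ)

def piExpect {n : ℕ} (f : (Fin n → α) → ℝ) : ℝ :=
  ∑ g, (∏ i, w (g i)) * f g

theorem piExpect_cons {n : ℕ} (f : (Fin (n + 1) → α) → ℝ) :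
    piExpect w f = ∑ a, w a * piExpect w (fun g => f (Fin.cons a g)) := by
  simp only [piExpect, Finset.mul_sum]
  rw [← (Fin.consEquiv fun _ => α).sum_comp, Fintype.sum_prod_type]
  simp only [Fin.consEquiv_apply, Fin.prod_univ_succ, Fin.cons_zero, Fin.cons_succ, mul_assoc]
  rfl

theorem piExpect_add {n : ℕ} (f f' : (Fin n → α) → ℝ) :
    piExpect w (fun g => f g + f' g) = piExpect w f + piExpect w f' := by
  simp only [piExpect, mul_add, sum_add_distrib]

theorem piExpect_neg {n : ℕ} (f : (Fin n → α) → ℝ) :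
    piExpect w (fun g => -f g) = -piExpect w f := by
  simp only [piExpect, mul_neg, sum_neg_distrib]

theorem piExpect_const_mul {n : ℕ} (c : ℝ) (f : (Fin n → α) → ℝ) :
    piExpect w (fun g => c * f g) = c * piExpect w f := by
  simp only [piExpect, Finset.mul_sum]
  exact sum_congr rfl fun g _ => mul_left_comm _ _ _

variable {w}

theorem piExpect_const (hw1 : ∑ a, w a = 1) {n : ℕ} (c : ℝ) :
    piExpect w (fun _ : Fin n → α => c) = c := by
  rw [piExpect, ← sum_mul, ← Fintype.prod_sum, hw1, prod_const_one, one_mul]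

theorem piExpect_mono (hw0 : ∀ a, 0 ≤ w a) {n : ℕ} {f f' : (Fin n → α) → ℝ}
    (h : ∀ g, f g ≤ f' g) : piExpect w f ≤ piExpect w f' :=
  sum_le_sum fun g _ => mul_le_mul_of_nonneg_left (h g) (prod_nonneg fun _ _ => hw0 _)

end ProductWeight

section BoundedDifferences

variable {α ι : Type*}

def HasBoundedDifferences (f : (ι → α) → ℝ) : Prop :=
  ∀ g h : ι → α, ∀ i, (∀ j ≠ i, g j = h j) → f g - f h ≤ 1

theorem HasBoundedDifferences.neg {f : (ι → α) → ℝ} (hf : HasBoundedDifferences f) :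
    HasBoundedDifferences fun g => -f g := fun g h i hgh => by
  linarith [hf h g i fun j hj => (hgh j hj).symm]

theorem HasBoundedDifferences.cons {n : ℕ} {f : (Fin (n + 1) → α) → ℝ}
    (hf : HasBoundedDifferences f) (a : α) :
    HasBoundedDifferences fun g : Fin n → α => f (Fin.cons a g) := by
  refine fun g h i hgh => hf _ _ i.succ fun j hj => ?_
  cases j using Fin.cases with
  | zero => rfl
  | succ k => exact hgh k fun hk => hj (congrArg _ hk)

theorem HasBoundedDifferences.cons_sub_cons_le {n : ℕ} {f : (Fin (n + 1) → α) → ℝ}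
    (hf : HasBoundedDifferences f) (a b : α) (g : Fin n → α) :
    f (Fin.cons a g) - f (Fin.cons b g) ≤ 1 := by
  refine hf _ _ 0 fun j hj => ?_
  obtain ⟨k, rfl⟩ := Fin.eq_succ_of_ne_zero hj
  simp

end BoundedDifferences

section McDiarmid

variable {α : Type*} [Fintype α] {w : α → ℝ}

theorem piExpect_exp_mul_sub_le (hw0 : ∀ a, 0 ≤ w a) (hw1 : ∑ a, w a = 1) {n : ℕ}
    {f : (Fin n → α) → ℝ} (hf : HasBoundedDifferences f) (t : ℝ) :
    piExpect w (fun g => exp (t * (f g - piExpect w f))) ≤ exp (n * t ^ 2 / 8) := by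
  induction n with
  | zero => simp [piExpect]
  | succ n ih =>
    have : Nonempty α := by
      by_contra h
      simp [not_nonempty_iff.mp h] at hw1
    set m := fun a => piExpect w fun g => f (Fin.cons a g)
    have hE : piExpect w f = ∑ a, w a * m a := piExpect_cons w f
    obtain ⟨a₀, ha₀⟩ := Finite.exists_min m
    have hm (a : α) : m a ∈ Set.Icc (m a₀) (m a₀ + 1) := by
      refine ⟨ha₀ a, ?_⟩
      rw [← piExpect_const hw1 (n := n) 1, ← piExpect_add]
      exact piExpect_mono hw0 fun g => by linarith [hf.cons_sub_cons_le a a₀ g]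
    calc piExpect w (fun g => exp (t * (f g - piExpect w f)))
        = ∑ a, w a * (exp (t * (m a - piExpect w f)) *
            piExpect w fun g => exp (t * (f (Fin.cons a g) - m a))) := by
          simp only [piExpect_cons w, ← piExpect_const_mul, ← exp_add, mul_sub]
          simp only [sub_add_sub_cancel']
      _ ≤ ∑ a, w a * (exp (t * (m a - piExpect w f)) * exp (n * t ^ 2 / 8)) := by
          gcongr with a
          · exact hw0 a
          · exact ih (hf.cons a)
      _ = (∑ a, w a * exp (t * (m a - ∑ b, w b * m b))) * exp (n * t ^ 2 / 8) := by
          rw [hE, sum_mul]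
          simp only [mul_assoc]
      _ ≤ exp ((m a₀ + 1 - m a₀) ^ 2 * t ^ 2 / 8) * exp (n * t ^ 2 / 8) := by
          gcongr
          exact sum_mul_exp_le_of_mem_Icc hw0 hw1 hm t
      _ = exp ((n + 1 : ℕ) * t ^ 2 / 8) := by
          rw [← exp_add]
          push_cast
          ring_nf

theorem piExpect_tail_le (hw0 : ∀ a, 0 ≤ w a) (hw1 : ∑ a, w a = 1) {n : ℕ} (hn : 0 < n)
    {f : (Fin n → α) → ℝ} (hf : HasBoundedDifferences f) {T : ℝ} (hT : 0 ≤ T) :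
    piExpect w (fun g => if T ≤ f g - piExpect w f then 1 else 0) ≤ exp (-2 * T ^ 2 / n) := by
  set t := 4 * T / n
  have ht : 0 ≤ t := by positivity
  -- Chernoff: `1{T ≤ y} ≤ exp (t (y - T))`, and `t = 4T/n` minimises `-tT + n t²/8`.
  calc piExpect w (fun g => if T ≤ f g - piExpect w f then 1 else 0)
      ≤ piExpect w (fun g => exp (-(t * T)) * exp (t * (f g - piExpect w f))) := by
        refine piExpect_mono hw0 fun g => ?_
        rw [← exp_add]
        split_ifs with h
        · exact one_le_exp (by nlinarith)
        · positivity
    _ ≤ exp (-(t * T)) * exp (n * t ^ 2 / 8) := by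
        rw [piExpect_const_mul]
        gcongr
        exact piExpect_exp_mul_sub_le hw0 hw1 hf t
    _ = exp (-2 * T ^ 2 / n) := by
        rw [← exp_add]
        congr 1
        simp only [t]
        field_simp
        ring

theorem piExpect_abs_tail_le (hw0 : ∀ a, 0 ≤ w a) (hw1 : ∑ a, w a = 1) {n : ℕ} (hn : 0 < n)
    {f : (Fin n → α) → ℝ} (hf : HasBoundedDifferences f) {T : ℝ} (hT : 0 ≤ T) :
    piExpect w (fun g => if T ≤ |f g - piExpect w f| then 1 else 0) ≤
      2 * exp (-2 * T ^ 2 / n) := by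
  have hlower := piExpect_tail_le hw0 hw1 hn hf.neg hT
  simp only [piExpect_neg, neg_sub_neg] at hlower
  calc piExpect w (fun g => if T ≤ |f g - piExpect w f| then 1 else 0)
      ≤ piExpect w (fun g => (if T ≤ f g - piExpect w f then 1 else 0) +
          if T ≤ piExpect w f - f g then 1 else 0) := by
        refine piExpect_mono hw0 fun g => ?_
        rcases abs_cases (f g - piExpect w f) with ⟨h, -⟩ | ⟨h, -⟩ <;> rw [h] <;>
          split_ifs <;> linarith
    _ ≤ 2 * exp (-2 * T ^ 2 / n) := by
        rw [piExpect_add]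
        linarith [piExpect_tail_le hw0 hw1 hn hf hT]

end McDiarmid

section RandomizedDistance

variable {ι : Type*} [Fintype ι]

theorem dl_le_dl_add_one {l x l' x' : ι → Bool} {i : ι}
    (h : ∀ j ≠ i, x j = x' j ∧ l j = l' j) (y : ι → Bool) : dl l x y ≤ dl l' x' y + 1 := by
  classical
  calc dl l x y ≤ (insert i (univ.filter fun j => x' j ≠ y j ∧ l' j = true)).card := by
        refine card_le_card fun j hj => ?_
        rcases eq_or_ne j i with rfl | hji
        · exact mem_insert_self _ _
        · obtain ⟨hx, hl⟩ := h j hji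
          simp_all
    _ ≤ dl l' x' y + 1 := card_insert_le _ _

theorem dlToSet_le_dlToSet_add_one (A : Set (ι → Bool)) {l x l' x' : ι → Bool} {i : ι}
    (h : ∀ j ≠ i, x j = x' j ∧ l j = l' j) : dlToSet l x A ≤ dlToSet l' x' A + 1 := by
  rcases A.eq_empty_or_nonempty with rfl | hA
  · simp [dlToSet]
  obtain ⟨y, hyA, hy⟩ := Nat.sInf_mem (hA.image fun y => dl l' x' y)
  calc dlToSet l x A ≤ dl l x y := Nat.sInf_le ⟨y, hyA, rfl⟩
    _ ≤ dl l' x' y + 1 := dl_le_dl_add_one h y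
    _ = dlToSet l' x' A + 1 := congrArg (· + 1) hy

-- The law of one pair `(x i, l i)`: `x i` uniform and `l i` Bernoulli(`p`).
noncomputable def bitWeight (p : ℝ) (a : Bool × Bool) : ℝ :=
  (if a.2 then p else 1 - p) / 2

theorem bitWeight_nonneg {p : ℝ} (hp0 : 0 ≤ p) (hp1 : p ≤ 1) (a : Bool × Bool) :
    0 ≤ bitWeight p a := by
  unfold bitWeight
  split_ifs <;> linarith

theorem sum_bitWeight (p : ℝ) : ∑ a, bitWeight p a = 1 := by
  simp only [bitWeight, Fintype.sum_prod_type, Fintype.sum_bool, if_true, Bool.false_eq_true,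
    if_false]
  ring

theorem prod_bitWeight (p : ℝ) (g : ι → Bool × Bool) :
    ∏ i, bitWeight p (g i) = bernWeight p (fun i => (g i).2) / 2 ^ Fintype.card ι := by
  simp [bitWeight, bernWeight, prod_div_distrib, prod_ite]

theorem hasBoundedDifferences_dlToSet (A : Set (ι → Bool)) :
    HasBoundedDifferences fun g : ι → Bool × Bool =>
      (dlToSet (fun i => (g i).2) (fun i => (g i).1) A : ℝ) := fun g h i hgh => by
  have := dlToSet_le_dlToSet_add_one A fun j hj =>
    ⟨congrArg Prod.fst (hgh j hj), congrArg Prod.snd (hgh j hj)⟩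
  dsimp only
  rw [sub_le_iff_le_add']
  exact_mod_cast this

end RandomizedDistance

theorem sum_bernWeight_mul_eq_piExpect (p : ℝ) {N : ℕ}
    (F : (Fin N → Bool) × (Fin N → Bool) → ℝ) :
    ∑ ω, bernWeight p ω.2 / 2 ^ N * F ω =
      piExpect (bitWeight p) fun g => F (fun i => (g i).1, fun i => (g i).2) := by
  rw [← (Equiv.arrowProdEquivProdArrow _ _ _).sum_comp]
  simp [piExpect, prod_bitWeight]

theorem avgDistP_eq_piExpect (p : ℝ) {N : ℕ} (A : Set (Fin N → Bool)) :
    avgDistP p A = piExpect (bitWeight p) fun g =>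
      (dlToSet (fun i => (g i).2) (fun i => (g i).1) A : ℝ) := by
  rw [avgDistP, Fintype.card_fin, sum_comm, ← Fintype.sum_prod_type',
    sum_bernWeight_mul_eq_piExpect]

open Classical in
theorem stmt11_general (p : ℝ) (hp0 : 0 < p) (hp1 : p ≤ 1) {N : ℕ} (hN : 1 ≤ N)
    (A : Set (Fin N → Bool)) (δ : ℝ) (hδ : 0 ≤ δ) :
    (∑ ω : (Fin N → Bool) × (Fin N → Bool),
        if δ + 4 * Real.sqrt N ≤ |(dlToSet ω.2 ω.1 A : ℝ) - avgDistP p A| then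
          bernWeight p ω.2 / 2 ^ N
        else 0) ≤
      4 * Real.exp (-δ ^ 2 / N) := by
  set T := δ + 4 * Real.sqrt N
  have hδT : δ ≤ T := le_add_of_nonneg_right (by positivity)
  have hevent := sum_bernWeight_mul_eq_piExpect p fun ω =>
    if T ≤ |(dlToSet ω.2 ω.1 A : ℝ) - avgDistP p A| then 1 else 0
  simp only [mul_boole] at hevent
  rw [hevent, avgDistP_eq_piExpect]
  calc _ ≤ 2 * exp (-2 * T ^ 2 / N) :=
        piExpect_abs_tail_le (bitWeight_nonneg hp0.le hp1) (sum_bitWeight p) hN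
          (hasBoundedDifferences_dlToSet A) (hδ.trans hδT)
    _ ≤ 4 * exp (-δ ^ 2 / N) := by
        gcongr
        · norm_num
        · nlinarith

open Classical in
/-- Lemma 6.2: for `0 < p ≤ 1`, nonempty `A ⊆ C_N` and `δ ≥ 0`, if `x` is uniform on `C_N`
and `l` has independent Bernoulli(p) coordinates (independent of `x`), then
`P(|d_l(x,A) - Δ(A,p)| ≥ δ + 4√N) ≤ 4 e^{-δ²/N}`. The probability of the event is written
as the sum of `bernWeight p l / 2^N` over the pairs `(x,l)` in the event. -/
theorem stmt11 (p : ℝ) (hp0 : 0 < p) (hp1 : p ≤ 1) {N : ℕ} (hN : 1 ≤ N)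
    (A : Set (Fin N → Bool)) (hA : A.Nonempty) (δ : ℝ) (hδ : 0 ≤ δ) :
    (∑ ω : (Fin N → Bool) × (Fin N → Bool),
        if δ + 4 * Real.sqrt N ≤ |(dlToSet ω.2 ω.1 A : ℝ) - avgDistP p A| then
          bernWeight p ω.2 / 2 ^ N
        else 0) ≤
      4 * Real.exp (-δ ^ 2 / N) :=
  stmt11_general p hp0 hp1 hN A δ hδ
end
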